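/- For every player i and every coalition C containing i, δ⁻(⊵_i,C) = |C ∩ N⁻_i| + Σ_{f ∈ N⁻_i} |{b ∈ C ∩ N⁻_i : f ▷_i b}|. -/

import Mathlib

/-! Basic machinery: weak orders, linear extensions, Kendall-tau,
and the directed Hausdorff–Kendall-tau distance. -/

section Orders

variable {P : Type*}

/-- The strict part `x ▷ y` of a relation `R`. -/
def strictOf (R : P → P → Prop) (x y : P) : Prop := R x y ∧ ¬ R y x

/-- The indifference part `x ∼ y` of a relation `R`. -/
def indiffOf (R : P → P → Prop) (x y : P) : Prop := R x y ∧ R y x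

/-- `R` is a weak order (total preorder) on the finite set `S`. -/
structure IsWeakOrderOn (S : Finset P) (R : P → P → Prop) : Prop where
  refl : ∀ x ∈ S, R x x
  trans : ∀ x ∈ S, ∀ y ∈ S, ∀ z ∈ S, R x y → R y z → R x z
  total : ∀ x ∈ S, ∀ y ∈ S, R x y ∨ R y x

/-- `A` is a linear extension on `S` of the weak order `R`: a strict total
order on `S` which is consistent with the strict part of `R`. -/
structure IsLinExtOn (S : Finset P) (R : P → P → Prop) (A : P → P → Prop) : Prop where
  irrefl : ∀ x ∈ S, ¬ A x x
  trans : ∀ x ∈ S, ∀ y ∈ S, ∀ z ∈ S, A x y → A y z → A x z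
  total : ∀ x ∈ S, ∀ y ∈ S, x ≠ y → A x y ∨ A y x
  extend : ∀ x ∈ S, ∀ y ∈ S, strictOf R x y → A x y

/-- The Kendall-tau distance between two strict (linear) orders on `S`:
the number of pairs ordered oppositely by the two orders. -/
noncomputable def kendallTau (S : Finset P) (A B : P → P → Prop) : ℕ :=
  Set.ncard {p : P × P | p.1 ∈ S ∧ p.2 ∈ S ∧ A p.1 p.2 ∧ B p.2 p.1}

/-- The directed Hausdorff–Kendall-tau distance `→τ(R1,R2)` between weak orders on `S`:
the maximum over linear extensions `B` of `R2` of the minimum over linear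
extensions `A` of `R1` of `τ(A,B)`. -/
noncomputable def dirTau (S : Finset P) (R1 R2 : P → P → Prop) : ℕ :=
  sSup { n : ℕ | ∃ B : P → P → Prop, IsLinExtOn S R2 B ∧
    n = sInf { m : ℕ | ∃ A : P → P → Prop, IsLinExtOn S R1 A ∧ m = kendallTau S A B } }

/-- The (undirected) Hausdorff–Kendall-tau distance `τ*`. -/
noncomputable def hkTau (S : Finset P) (R1 R2 : P → P → Prop) : ℕ :=
  max (dirTau S R1 R2) (dirTau S R2 R1)

end Orders

/-! FEN-hedonic games with distance-based preferences. -/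

section Game

/-- A FEN preference for player `i`: disjoint sets of friends and enemies
(not containing `i`) together with weak orders on the friends and on the enemies. -/
structure FENPref (P : Type*) (i : P) where
  friends : Finset P
  enemies : Finset P
  Rp : P → P → Prop
  Rm : P → P → Prop
  disj : Disjoint friends enemies
  self_not_friend : i ∉ friends
  self_not_enemy : i ∉ enemies
  wo_p : IsWeakOrderOn friends Rp
  wo_m : IsWeakOrderOn enemies Rm

variable {P : Type*} {i : P}

/-- The weak order `⊵⁺_i` on `N⁺_i ∪ {i}`: the friends, ordered by `⊵_i`,
all strictly above `i`. -/
def FENPref.prefPlus (pr : FENPref P i) (x y : P) : Prop :=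
  (x ∈ pr.friends ∧ y ∈ pr.friends ∧ pr.Rp x y) ∨
  (x ∈ pr.friends ∧ y = i) ∨
  (x = i ∧ y = i)

/-- The weak order `⊵⁻_i` on `N⁻_i ∪ {i}`: `i` strictly above all enemies,
which are ordered by `⊵_i`. -/
def FENPref.prefMinus (pr : FENPref P i) (x y : P) : Prop :=
  (x = i ∧ y = i) ∨
  (x = i ∧ y ∈ pr.enemies) ∨
  (x ∈ pr.enemies ∧ y ∈ pr.enemies ∧ pr.Rm x y)

/-- The weak order `C⁺_i` on `N⁺_i ∪ {i}`: friends in `C` strictly above `i`,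
ordered by `⊵_i`; friends not in `C` strictly below `i`, ordered by the reverse of `⊵_i`. -/
def FENPref.coalPlus (pr : FENPref P i) (C : Finset P) (x y : P) : Prop :=
  (x ∈ pr.friends ∧ x ∈ C ∧ y ∈ pr.friends ∧ y ∈ C ∧ pr.Rp x y) ∨
  ((x ∈ pr.friends ∧ x ∈ C) ∧ (y = i ∨ (y ∈ pr.friends ∧ y ∉ C))) ∨
  (x = i ∧ (y = i ∨ (y ∈ pr.friends ∧ y ∉ C))) ∨
  (x ∈ pr.friends ∧ x ∉ C ∧ y ∈ pr.friends ∧ y ∉ C ∧ pr.Rp y x)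

/-- The weak order `C⁻_i` on `N⁻_i ∪ {i}`: enemies in `C` strictly above `i`,
ordered by the reverse of `⊵_i`; enemies not in `C` strictly below `i`, ordered by `⊵_i`. -/
def FENPref.coalMinus (pr : FENPref P i) (C : Finset P) (x y : P) : Prop :=
  (x ∈ pr.enemies ∧ x ∈ C ∧ y ∈ pr.enemies ∧ y ∈ C ∧ pr.Rm y x) ∨
  ((x ∈ pr.enemies ∧ x ∈ C) ∧ (y = i ∨ (y ∈ pr.enemies ∧ y ∉ C))) ∨
  (x = i ∧ (y = i ∨ (y ∈ pr.enemies ∧ y ∉ C))) ∨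
  (x ∈ pr.enemies ∧ x ∉ C ∧ y ∈ pr.enemies ∧ y ∉ C ∧ pr.Rm x y)

variable [DecidableEq P]

/-- `δ⁺(⊵_i, C) = →τ(⊵⁺_i, C⁺_i)`. -/
noncomputable def FENPref.deltaPlus (pr : FENPref P i) (C : Finset P) : ℕ :=
  dirTau (insert i pr.friends) pr.prefPlus (pr.coalPlus C)

/-- `δ⁻(⊵_i, C) = →τ(⊵⁻_i, C⁻_i)`. -/
noncomputable def FENPref.deltaMinus (pr : FENPref P i) (C : Finset P) : ℕ :=
  dirTau (insert i pr.enemies) pr.prefMinus (pr.coalMinus C)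

/-- `δ(⊵_i, C) = δ⁺(⊵_i, C) + δ⁻(⊵_i, C)`. -/
noncomputable def FENPref.delta (pr : FENPref P i) (C : Finset P) : ℕ :=
  pr.deltaPlus C + pr.deltaMinus C

end Game

/-! For weak orders `π` and `σ`, fix a linear extension `B` of `σ`. Refining `π` by `B` gives the
extension of `π` closest to `B`: it disagrees with `B` only on pairs that `π` orders strictly,
which every extension of `π` must disagree on. Every such pair is ordered weakly the other way
by `σ`, and breaking the ties of `σ` against `π` realises all of them at once. Hence
`→τ(π, σ)` counts the pairs `x ▷_π y` with `y ⊵_σ x`; for `⊵⁻_i` and `C⁻_i` these are the pairs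
`(i, b)` and `(f, b)` with `b ∈ C ∩ N⁻_i` and `f ▷_i b`. -/

section LinearExtensions

variable {P : Type*} {S : Finset P} {R A B : P → P → Prop}

def pairsOn (S : Finset P) (Q : P → P → Prop) : Set (P × P) :=
  {p | p.1 ∈ S ∧ p.2 ∈ S ∧ Q p.1 p.2}

theorem pairsOn_finite (S : Finset P) (Q : P → P → Prop) : (pairsOn S Q).Finite :=
  (S ×ˢ S).finite_toSet.subset fun _ hp => Finset.mem_product.2 ⟨hp.1, hp.2.1⟩

theorem ncard_pairsOn_mono {Q Q' : P → P → Prop} (h : ∀ x ∈ S, ∀ y ∈ S, Q x y → Q' x y) :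
    (pairsOn S Q).ncard ≤ (pairsOn S Q').ncard :=
  Set.ncard_le_ncard (fun _ ⟨hx, hy, hq⟩ => ⟨hx, hy, h _ hx _ hy hq⟩) (pairsOn_finite S Q')

theorem ncard_pairsOn_eq_sum (S : Finset P) (Q : P → P → Prop) :
    (pairsOn S Q).ncard = ∑ x ∈ S, {y | y ∈ S ∧ Q x y}.ncard := by
  classical
  have hpairs : pairsOn S Q = ↑((S ×ˢ S).filter fun p => Q p.1 p.2) := by
    ext; simp [pairsOn, and_assoc]
  have hfiber : ∀ x, {y | y ∈ S ∧ Q x y} = ↑(S.filter (Q x)) := fun x => by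
    ext y; simp
  simp only [hpairs, hfiber, Set.ncard_coe_finset, Finset.card_filter, Finset.sum_product]

theorem kendallTau_eq_ncard_pairsOn (S : Finset P) (A B : P → P → Prop) :
    kendallTau S A B = (pairsOn S fun x y => A x y ∧ B y x).ncard :=
  rfl

theorem IsLinExtOn.asymm (hA : IsLinExtOn S R A) {x y : P} (hx : x ∈ S) (hy : y ∈ S)
    (h : A x y) : ¬ A y x :=
  fun h' => hA.irrefl x hx (hA.trans x hx y hy x hx h h')

theorem IsLinExtOn.rel_of_rel (hR : IsWeakOrderOn S R) (hA : IsLinExtOn S R A) {x y : P}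
    (hx : x ∈ S) (hy : y ∈ S) (h : A x y) : R x y := by
  by_contra hxy
  exact hA.asymm hx hy h (hA.extend y hy x hx ⟨(hR.total x hx y hy).resolve_left hxy, hxy⟩)

theorem IsWeakOrderOn.flip (hR : IsWeakOrderOn S R) : IsWeakOrderOn S (flip R) where
  refl := hR.refl
  trans x hx y hy z hz hxy hyz := hR.trans z hz y hy x hx hyz hxy
  total x hx y hy := hR.total y hy x hx

def refineRel (R W : P → P → Prop) (x y : P) : Prop :=
  strictOf R x y ∨ (indiffOf R x y ∧ W x y)

theorem IsWeakOrderOn.isLinExtOn_refineRel {W : P → P → Prop} (hR : IsWeakOrderOn S R)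
    (hWirrefl : ∀ x ∈ S, ¬ W x x)
    (hWtrans : ∀ x ∈ S, ∀ y ∈ S, ∀ z ∈ S, W x y → W y z → W x z)
    (hWtotal : ∀ x ∈ S, ∀ y ∈ S, x ≠ y → W x y ∨ W y x) :
    IsLinExtOn S R (refineRel R W) where
  irrefl x hx h := by
    rcases h with ⟨h, h'⟩ | ⟨-, h⟩
    exacts [h' h, hWirrefl x hx h]
  trans x hx y hy z hz := by
    have := hR.trans x hx y hy z hz
    have := hR.trans y hy z hz x hx
    have := hR.trans z hz x hx y hy
    have := hR.trans z hz y hy x hx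
    have := hWtrans x hx y hy z hz
    unfold refineRel strictOf indiffOf
    tauto
  total x hx y hy hxy := by
    have := hR.total x hx y hy
    have := hWtotal x hx y hy hxy
    unfold refineRel strictOf indiffOf
    tauto
  extend _ _ _ _ := Or.inl

theorem IsWeakOrderOn.isLinExtOn_refineRel_wellOrderingRel (hR : IsWeakOrderOn S R) :
    IsLinExtOn S R (refineRel R WellOrderingRel) :=
  hR.isLinExtOn_refineRel (fun x _ => irrefl x) (fun _ _ _ _ _ _ => _root_.trans)
    fun x _ y _ hxy => (trichotomous_of WellOrderingRel x y).imp_right (·.resolve_left hxy)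

theorem ncard_strictOf_le_kendallTau (hA : IsLinExtOn S R A) :
    (pairsOn S fun x y => strictOf R x y ∧ B y x).ncard ≤ kendallTau S A B := by
  rw [kendallTau_eq_ncard_pairsOn]
  exact ncard_pairsOn_mono fun x hx y hy h => ⟨hA.extend x hx y hy h.1, h.2⟩

theorem kendallTau_refineRel {R' : P → P → Prop} (hB : IsLinExtOn S R' B) :
    kendallTau S (refineRel R B) B = (pairsOn S fun x y => strictOf R x y ∧ B y x).ncard := by
  rw [kendallTau_eq_ncard_pairsOn]
  congr 1
  ext ⟨x, y⟩
  refine and_congr_right fun hx => and_congr_right fun hy => ?_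
  refine ⟨fun ⟨hA, hyx⟩ => ⟨hA.resolve_right fun h => hB.asymm hy hx hyx h.2, hyx⟩,
    fun ⟨h, hyx⟩ => ⟨Or.inl h, hyx⟩⟩

theorem sInf_kendallTau_eq (hR : IsWeakOrderOn S R) {R' : P → P → Prop}
    (hB : IsLinExtOn S R' B) :
    sInf {m | ∃ A, IsLinExtOn S R A ∧ m = kendallTau S A B} =
      (pairsOn S fun x y => strictOf R x y ∧ B y x).ncard := by
  have hmem : (pairsOn S fun x y => strictOf R x y ∧ B y x).ncard ∈
      {m | ∃ A, IsLinExtOn S R A ∧ m = kendallTau S A B} :=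
    ⟨_, hR.isLinExtOn_refineRel hB.irrefl hB.trans hB.total, (kendallTau_refineRel hB).symm⟩
  refine le_antisymm (Nat.sInf_le hmem) (le_csInf ⟨_, hmem⟩ ?_)
  rintro _ ⟨A, hA, rfl⟩
  exact ncard_strictOf_le_kendallTau hA

theorem dirTau_eq_ncard {σ : P → P → Prop} (hR : IsWeakOrderOn S R) (hσ : IsWeakOrderOn S σ) :
    dirTau S R σ = (pairsOn S fun x y => strictOf R x y ∧ σ y x).ncard := by
  -- `B₀` breaks the ties of `σ` against `R`, making every `R`-strict pair tied by `σ` discordant.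
  set B₀ := refineRel σ (refineRel (flip R) WellOrderingRel)
  have hB₀ : IsLinExtOn S σ B₀ := by
    have h := hR.flip.isLinExtOn_refineRel_wellOrderingRel
    exact hσ.isLinExtOn_refineRel h.irrefl h.trans h.total
  have hB₀_eq : (pairsOn S fun x y => strictOf R x y ∧ B₀ y x) =
      pairsOn S fun x y => strictOf R x y ∧ σ y x := by
    ext ⟨x, y⟩
    refine and_congr_right fun hx => and_congr_right fun hy => ?_
    refine ⟨fun h => ⟨h.1, hB₀.rel_of_rel hσ hy hx h.2⟩, fun ⟨h, hyx⟩ => ⟨h, ?_⟩⟩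
    by_cases hxy : σ x y
    · exact Or.inr ⟨⟨hyx, hxy⟩, Or.inl h⟩
    · exact Or.inl ⟨hyx, hxy⟩
  refine IsGreatest.csSup_eq ⟨⟨B₀, hB₀, by rw [sInf_kendallTau_eq hR hB₀, hB₀_eq]⟩, ?_⟩
  rintro _ ⟨B, hB, rfl⟩
  rw [sInf_kendallTau_eq hR hB]
  exact ncard_pairsOn_mono fun x hx y hy h => ⟨h.1, hB.rel_of_rel hσ hy hx h.2⟩

end LinearExtensions

section DistanceMinus

variable {P : Type*} [DecidableEq P] {i : P}

theorem FENPref.isWeakOrderOn_prefMinus (pr : FENPref P i) :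
    IsWeakOrderOn (insert i pr.enemies) pr.prefMinus := by
  have := pr.self_not_enemy
  have := pr.wo_m
  constructor <;> grind [IsWeakOrderOn, FENPref.prefMinus]

theorem FENPref.isWeakOrderOn_coalMinus (pr : FENPref P i) (C : Finset P) :
    IsWeakOrderOn (insert i pr.enemies) (pr.coalMinus C) := by
  have := pr.self_not_enemy
  have := pr.wo_m
  constructor <;> grind [IsWeakOrderOn, FENPref.coalMinus]

theorem FENPref.setOf_strictOf_prefMinus_self (pr : FENPref P i) (C : Finset P) :
    {y | y ∈ insert i pr.enemies ∧ strictOf pr.prefMinus i y ∧ pr.coalMinus C y i} =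
      ↑(C ∩ pr.enemies) := by
  have := pr.self_not_enemy
  ext y
  simp only [Set.mem_ofPred_eq, Finset.coe_inter, Set.mem_inter_iff, Finset.mem_coe,
    Finset.mem_insert, strictOf, FENPref.prefMinus, FENPref.coalMinus]
  grind

theorem FENPref.setOf_strictOf_prefMinus_enemy (pr : FENPref P i) (C : Finset P) {f : P}
    (hf : f ∈ pr.enemies) :
    {y | y ∈ insert i pr.enemies ∧ strictOf pr.prefMinus f y ∧ pr.coalMinus C y f} =
      {b | b ∈ C ∩ pr.enemies ∧ strictOf pr.Rm f b} := by
  have := pr.self_not_enemy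
  ext y
  simp only [Set.mem_ofPred_eq, Finset.mem_inter, Finset.mem_insert, strictOf,
    FENPref.prefMinus, FENPref.coalMinus]
  grind

end DistanceMinus

theorem deltaMinus_char_general {P : Type*} [DecidableEq P] {i : P} (pr : FENPref P i)
    (C : Finset P) :
    pr.deltaMinus C =
      (C ∩ pr.enemies).card +
        ∑ f ∈ pr.enemies, Set.ncard {b : P | b ∈ C ∩ pr.enemies ∧ strictOf pr.Rm f b} := by
  rw [FENPref.deltaMinus,
    dirTau_eq_ncard pr.isWeakOrderOn_prefMinus (pr.isWeakOrderOn_coalMinus C),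
    ncard_pairsOn_eq_sum, Finset.sum_insert pr.self_not_enemy,
    pr.setOf_strictOf_prefMinus_self C, Set.ncard_coe_finset]
  congr 1
  exact Finset.sum_congr rfl fun f hf => by rw [pr.setOf_strictOf_prefMinus_enemy C hf]

/-- Characterization of `δ⁻`: for every player `i` and coalition `C` containing `i`,
`δ⁻(⊵_i,C) = |C ∩ N⁻_i| + Σ_{f ∈ N⁻_i} |{b ∈ C ∩ N⁻_i : f ▷_i b}|`. -/
theorem deltaMinus_char {P : Type*} [DecidableEq P] {i : P} (pr : FENPref P i)
    (C : Finset P) (hiC : i ∈ C) :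
    pr.deltaMinus C =
      (C ∩ pr.enemies).card +
        ∑ f ∈ pr.enemies, Set.ncard {b : P | b ∈ C ∩ pr.enemies ∧ strictOf pr.Rm f b} :=
  deltaMinus_char_general pr C
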